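/- arXiv:1104.1974 — 2 statements merged into one kernel-verified Lean document; each statement's English description precedes it below -/
import Mathlib

section
/- For q_1 ∈ (0,1] and q_j = q_1/(1+q_1(j-1)), h_j = q_1(1+q_1(j-1))^{-3/2}, there exists a constant C independent of q_1 and j such that Σ_{s=1}^{j-1} (q_j/q_{s+1})² h_s² ≤ C h_j. -/
/-- The approximate Kosterlitz RG solution `q_j = q_1/(1 + q_1 (j-1))`. -/
noncomputable def ktq (q1 : ℝ) (j : ℕ) : ℝ := q1 / (1 + q1 * ((j : ℝ) - 1))

/-- The weight sequence `h_j = q_1 (1 + q_1(j-1))^{-3/2}`. -/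
noncomputable def kth (q1 : ℝ) (j : ℕ) : ℝ :=
  q1 * (1 + q1 * ((j : ℝ) - 1)) ^ (-(3 : ℝ) / 2)

/-- Auxiliary: the square-root weight used for telescoping. -/
noncomputable def ktg (q1 : ℝ) (s : ℕ) : ℝ := Real.sqrt (1 + q1 * s)

/-- Auxiliary: the core termwise real inequality. -/
lemma kt_term (q1 u v w : ℝ) (hq0 : 0 < q1) (hq1 : q1 ≤ 1) (hu1 : 1 ≤ u)
    (hvu : v = u + q1) (hvw : v ≤ w) (hw1 : 1 ≤ w) :
    (v / w) ^ 2 * (q1 ^ 2 * (u ^ 3)⁻¹)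
      ≤ 12 * q1 / w ^ 2 * (Real.sqrt v - Real.sqrt u) := by
  have hu0 : (0:ℝ) < u := by linarith
  have hv0 : (0:ℝ) < v := by linarith
  have hw0 : (0:ℝ) < w := by linarith
  set su := Real.sqrt u with hsu
  set sv := Real.sqrt v with hsv
  have hsu2 : su ^ 2 = u := Real.sq_sqrt hu0.le
  have hsv2 : sv ^ 2 = v := Real.sq_sqrt hv0.le
  have hsu1 : (1:ℝ) ≤ su := by rw [hsu]; exact Real.one_le_sqrt.mpr hu1
  have hsv0 : (0:ℝ) ≤ sv := Real.sqrt_nonneg v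
  have hsvsu : su ≤ sv := Real.sqrt_le_sqrt (by linarith)
  clear_value su sv
  have hsu0 : (0:ℝ) < su := by linarith
  have hsuu : su ≤ u := by nlinarith
  have hv2u : v ≤ 2 * u := by linarith
  have hsv2su : sv ≤ 2 * su := by
    nlinarith [sq_nonneg (sv - 2*su)]
  have h1 : q1 ≤ 3 * su * (sv - su) := by
    nlinarith [mul_nonneg (sub_nonneg.2 hsvsu) (sub_nonneg.2 hsv2su)]
  have hvsq : v ^ 2 ≤ 4 * u ^ 2 := by nlinarith
  rw [div_pow, div_mul_eq_mul_div, div_mul_eq_mul_div,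
    div_le_div_iff₀ (by positivity) (by positivity)]
  have h2 : q1 * v ^ 2 ≤ 12 * (sv - su) * u ^ 3 := by
    have h3 : q1 * u ^ 2 ≤ 3 * su * (sv - su) * u ^ 2 := by nlinarith
    have h4 : su * (sv - su) * u ^ 2 ≤ (sv - su) * u ^ 3 := by
      have h5 := mul_le_mul_of_nonneg_right
        (mul_le_mul_of_nonneg_right hsuu (sub_nonneg.2 hsvsu)) (sq_nonneg u)
      nlinarith [h5]
    nlinarith
  calc v ^ 2 * (q1 ^ 2 * (u ^ 3)⁻¹) * w ^ 2
      = (q1 * v ^ 2) * (q1 * (u ^ 3)⁻¹ * w ^ 2) := by ring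
    _ ≤ (12 * (sv - su) * u ^ 3) * (q1 * (u ^ 3)⁻¹ * w ^ 2) := by
        apply mul_le_mul_of_nonneg_right h2
        positivity
    _ = 12 * q1 * (sv - su) * w ^ 2 * (u ^ 3 * (u ^ 3)⁻¹) := by ring
    _ = 12 * q1 * (sv - su) * w ^ 2 := by
        rw [mul_inv_cancel₀ (by positivity)]; ring

/-- Auxiliary: the final comparison `(12 q1 / w²)(√w − 1) ≤ 12 q1 w^{-3/2}`. -/
lemma kt_final (q1 w : ℝ) (hq0 : 0 < q1) (hw1 : 1 ≤ w) :
    12 * q1 / w ^ 2 * (Real.sqrt w - 1) ≤ 12 * (q1 * w ^ (-(3:ℝ)/2)) := by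
  have hw0 : (0:ℝ) < w := by linarith
  have hwpow : w ^ (-(3:ℝ)/2) = Real.sqrt w / w ^ 2 := by
    rw [show (-(3:ℝ)/2) = 1/2 - 2 by norm_num, Real.rpow_sub hw0,
      ← Real.sqrt_eq_rpow, Real.rpow_two]
  rw [hwpow]
  have hsw0 : (0:ℝ) ≤ Real.sqrt w := Real.sqrt_nonneg w
  rw [div_mul_eq_mul_div, div_le_iff₀ (by positivity)]
  have h : 12 * (q1 * (Real.sqrt w / w ^ 2)) * w ^ 2
      = 12 * q1 * Real.sqrt w * (w ^ 2 / w ^ 2) := by ring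
  rw [h, div_self (by positivity), mul_one]
  nlinarith

/-- The stable-direction estimate `Σ_{s=1}^{j-1} (q_j/q_{s+1})² h_s² ≤ C h_j`,
with `C` independent of `q_1 ∈ (0,1]` and `j`. -/
theorem stmt3 :
    ∃ C : ℝ, 0 < C ∧ ∀ q1 : ℝ, 0 < q1 → q1 ≤ 1 → ∀ j : ℕ, 1 ≤ j →
      (∑ s ∈ Finset.Icc 1 (j - 1), (ktq q1 j / ktq q1 (s + 1)) ^ 2 * (kth q1 s) ^ 2)
        ≤ C * kth q1 j := by
  refine ⟨12, by norm_num, ?_⟩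
  intro q1 hq0 hq1 j hj
  have hj1 : (1:ℝ) ≤ (j:ℝ) := by exact_mod_cast hj
  set w : ℝ := 1 + q1 * ((j:ℝ) - 1) with hw
  have hw1 : (1:ℝ) ≤ w := by nlinarith
  have hw0 : (0:ℝ) < w := by linarith
  have key : ∀ s ∈ Finset.Icc 1 (j-1),
      (ktq q1 j / ktq q1 (s+1))^2 * (kth q1 s)^2
        ≤ (12 * q1 / w^2) * (ktg q1 s - ktg q1 (s-1)) := by
    intro s hs
    rw [Finset.mem_Icc] at hs
    obtain ⟨hs1, hsj⟩ := hs
    have hsj' : s + 1 ≤ j := by omega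
    have hsr : (1:ℝ) ≤ (s:ℝ) := by exact_mod_cast hs1
    have hsjr : (s:ℝ) + 1 ≤ (j:ℝ) := by exact_mod_cast hsj'
    set u : ℝ := 1 + q1 * ((s:ℝ) - 1) with hu
    set v : ℝ := 1 + q1 * (s:ℝ) with hv
    have hu1 : (1:ℝ) ≤ u := by nlinarith
    have hu0 : (0:ℝ) < u := by linarith
    have hvu : v = u + q1 := by rw [hu, hv]; ring
    have hvw : v ≤ w := by rw [hv, hw]; nlinarith
    have hq : ktq q1 j / ktq q1 (s+1) = v / w := by
      unfold ktq
      rw [← hw]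
      have h6 : (1 + q1 * (((s+1:ℕ):ℝ) - 1)) = v := by push_cast [hv]; ring
      rw [h6]
      have hv0 : (0:ℝ) < v := by linarith
      field_simp
    have hh : (kth q1 s)^2 = q1^2 * (u^3)⁻¹ := by
      unfold kth
      rw [← hu, mul_pow]
      congr 1
      rw [← Real.rpow_natCast (u ^ (-(3:ℝ)/2)) 2, ← Real.rpow_mul hu0.le]
      norm_num
    have hcast : ((s-1:ℕ):ℝ) = (s:ℝ) - 1 := by
      rw [Nat.cast_sub hs1]; norm_num
    have hfs : ktg q1 s = Real.sqrt v := by rw [ktg, hv]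
    have hfs1 : ktg q1 (s-1) = Real.sqrt u := by rw [ktg, hcast, hu]
    rw [hq, hh, hfs, hfs1]
    exact kt_term q1 u v w hq0 hq1 hu1 hvu hvw hw1
  have tel : ∑ s ∈ Finset.Icc 1 (j-1), (ktg q1 s - ktg q1 (s-1))
      = ktg q1 (j-1) - ktg q1 0 := by
    have hIcc : Finset.Icc 1 (j-1) = Finset.Ico 1 j := by
      rw [← Finset.Ico_add_one_right_eq_Icc]
      congr 1
      omega
    rw [hIcc, Finset.sum_Ico_eq_sum_range, ← Finset.sum_range_sub (ktg q1) (j-1)]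
    apply Finset.sum_congr rfl
    intro i _
    congr 2 <;> omega
  calc (∑ s ∈ Finset.Icc 1 (j - 1), (ktq q1 j / ktq q1 (s + 1)) ^ 2 * (kth q1 s) ^ 2)
      ≤ ∑ s ∈ Finset.Icc 1 (j-1), (12 * q1 / w^2) * (ktg q1 s - ktg q1 (s-1)) :=
        Finset.sum_le_sum key
    _ = (12 * q1 / w^2) * (ktg q1 (j-1) - ktg q1 0) := by rw [← Finset.mul_sum, tel]
    _ ≤ 12 * kth q1 j := by
        have hfj : ktg q1 (j-1) = Real.sqrt w := by
          rw [ktg, Nat.cast_sub hj, hw]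
          norm_num
        have hf0 : ktg q1 0 = 1 := by simp [ktg]
        rw [hfj, hf0]
        unfold kth
        rw [← hw]
        exact kt_final q1 w hq0 hw1
end

section
/- For q_1 ∈ (0,1], q_j = q_1/(1+q_1(j-1)), p_j = 2^{-(j-1)}, and h_j = q_1(1+q_1(j-1))^{-3/2}, there exists a constant C independent of q_1 and j such that Σ_{s=1}^{j-1} (q_j/q_{s+1})² p_s q_s ≤ C h_j and Σ_{s≥j} (q_{s+1}/q_j) p_s q_s ≤ C h_j. -/
/-- The geometric sequence `p_j = 2^{-(j-1)}`. -/
noncomputable def ktp (j : ℕ) : ℝ := (1 / 2 : ℝ) ^ (j - 1)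

lemma nat_sq_le (n : ℕ) : (n + 1) ^ 2 ≤ 3 * 2 ^ n := by
  induction n with
  | zero => norm_num
  | succ k ih =>
    rcases k with _ | _ | m
    · norm_num
    · norm_num
    · have h2 : (m + 2 + 1 + 1) ^ 2 ≤ 2 * (m + 2 + 1) ^ 2 := by
        have e : 2 * (m + 2 + 1) ^ 2 = (m + 2 + 1 + 1) ^ 2 + (m ^ 2 + 4 * m + 2) := by ring
        rw [e]; exact Nat.le_add_right _ _
      calc (m + 2 + 1 + 1) ^ 2 ≤ 2 * (m + 2 + 1) ^ 2 := h2
        _ ≤ 2 * (3 * 2 ^ (m + 2)) := Nat.mul_le_mul_left 2 ih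
        _ = 3 * 2 ^ (m + 2 + 1) := by ring

set_option maxHeartbeats 1000000 in
/-- Estimates `|T_j^±(pq)| ≤ C h_j` for the stable and unstable summation operators
applied to the mixed sequence `p_s q_s`, with `C` independent of `q_1 ∈ (0,1]` and `j`. -/
theorem stmt4 :
    ∃ C : ℝ, 0 < C ∧ ∀ q1 : ℝ, 0 < q1 → q1 ≤ 1 → ∀ j : ℕ, 1 ≤ j →
      (∑ s ∈ Finset.Icc 1 (j - 1), (ktq q1 j / ktq q1 (s + 1)) ^ 2 * (ktp s * ktq q1 s))
          ≤ C * kth q1 j ∧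
      Summable (fun t : ℕ => (ktq q1 (j + t + 1) / ktq q1 j) * (ktp (j + t) * ktq q1 (j + t))) ∧
      (∑' t : ℕ, (ktq q1 (j + t + 1) / ktq q1 j) * (ktp (j + t) * ktq q1 (j + t)))
          ≤ C * kth q1 j := by
  refine ⟨16, by norm_num, ?_⟩
  intro q1 hq0 hq1 j hj
  set Q : ℕ → ℝ := fun n => 1 + q1 * ((n : ℝ) - 1) with hQdef
  have hQ1 : ∀ n : ℕ, 1 ≤ n → 1 ≤ Q n := by
    intro n hn
    have : (1 : ℝ) ≤ (n : ℝ) := by exact_mod_cast hn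
    have : 0 ≤ q1 * ((n : ℝ) - 1) := by nlinarith
    simp only [hQdef]; linarith
  have hQj1 : 1 ≤ Q j := hQ1 j hj
  have hQjpos : 0 < Q j := lt_of_lt_of_le one_pos hQj1
  have hsQj : Real.sqrt (Q j) * Real.sqrt (Q j) = Q j := Real.mul_self_sqrt hQjpos.le
  have hsQjpos : 0 < Real.sqrt (Q j) := Real.sqrt_pos.mpr hQjpos
  -- rewrite kth
  have hkth : kth q1 j = q1 / (Q j * Real.sqrt (Q j)) := by
    rw [kth]
    have h32 : Q j ^ ((3 : ℝ) / 2) = Q j * Real.sqrt (Q j) := by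
      rw [show (3 : ℝ) / 2 = 1 + 1 / 2 by norm_num, Real.rpow_add hQjpos, Real.rpow_one,
        ← Real.sqrt_eq_rpow]
    rw [show (-(3 : ℝ) / 2) = -((3 : ℝ) / 2) by norm_num, Real.rpow_neg hQjpos.le, h32,
      div_eq_mul_inv]
  have hs2 : Real.sqrt 2 * Real.sqrt 2 = 2 := Real.mul_self_sqrt (by norm_num)
  have hs2pos : 0 < Real.sqrt 2 := Real.sqrt_pos.mpr (by norm_num)
  have hs2gt : (4 / 3 : ℝ) ≤ Real.sqrt 2 := by nlinarith [Real.sqrt_nonneg 2]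
  set r : ℝ := (Real.sqrt 2)⁻¹ with hrdef
  have hr0 : 0 ≤ r := by positivity
  have hr34 : r ≤ 3 / 4 := by
    rw [hrdef, inv_le_comm₀ hs2pos (by norm_num)]
    linarith
  have hr1 : r < 1 := lt_of_le_of_lt hr34 (by norm_num)
  have hmulr : (1 / 2 : ℝ) * Real.sqrt 2 = r := by
    rw [hrdef]; field_simp; exact Real.sq_sqrt (by norm_num)
  constructor
  · -- first sum
    have hterm : ∀ s ∈ Finset.Icc 1 (j - 1),
        (ktq q1 j / ktq q1 (s + 1)) ^ 2 * (ktp s * ktq q1 s)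
          ≤ 4 * q1 / (Q j * Real.sqrt (Q j)) * r ^ s := by
      intro s hs
      rw [Finset.mem_Icc] at hs
      obtain ⟨hs1, hs2'⟩ := hs
      have hsj : s + 1 ≤ j := by omega
      have hQs : 1 ≤ Q s := hQ1 s hs1
      have hQs1' : 1 ≤ Q (s + 1) := hQ1 (s + 1) (by omega)
      have hQspos : 0 < Q s := by linarith
      have hQs1pos : 0 < Q (s + 1) := by linarith
      have hQadd : Q (s + 1) = Q s + q1 := by simp only [hQdef]; push_cast; ring
      have hAA : Q (s + 1) ≤ 2 * Q s := by rw [hQadd]; linarith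
      have hQle : Q (s + 1) ≤ Q j := by
        simp only [hQdef]
        have h : ((s : ℝ) + 1) ≤ (j : ℝ) := by exact_mod_cast hsj
        push_cast
        nlinarith
      have hpow2 : Q (s + 1) ≤ (2 : ℝ) ^ s := by
        have h1 : (s : ℝ) + 1 ≤ (2 : ℝ) ^ s := by exact_mod_cast (Nat.lt_two_pow_self (n := s))
        have h0 : (0 : ℝ) ≤ (s : ℝ) := Nat.cast_nonneg s
        simp only [hQdef]
        push_cast
        nlinarith
      have hsqrt2pows : Real.sqrt ((2 : ℝ) ^ s) = (Real.sqrt 2) ^ s := by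
        rw [show ((2 : ℝ) ^ s) = (Real.sqrt 2) ^ s * (Real.sqrt 2) ^ s by
          rw [← mul_pow, hs2], Real.sqrt_mul_self (by positivity)]
      have hB : Q (s + 1) ≤ Real.sqrt (Q j) * (Real.sqrt 2) ^ s := by
        have e1 : Real.sqrt (Q (s + 1)) ≤ Real.sqrt (Q j) := Real.sqrt_le_sqrt hQle
        have e2 : Real.sqrt (Q (s + 1)) ≤ (Real.sqrt 2) ^ s := by
          rw [← hsqrt2pows]; exact Real.sqrt_le_sqrt hpow2
        calc Q (s + 1) = Real.sqrt (Q (s + 1)) * Real.sqrt (Q (s + 1)) :=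
              (Real.mul_self_sqrt hQs1pos.le).symm
          _ ≤ Real.sqrt (Q j) * (Real.sqrt 2) ^ s :=
              mul_le_mul e1 e2 (Real.sqrt_nonneg _) (Real.sqrt_nonneg _)
      have hratio : ktq q1 j / ktq q1 (s + 1) = Q (s + 1) / Q j := by
        show q1 / Q j / (q1 / Q (s + 1)) = Q (s + 1) / Q j
        rw [div_div_div_comm, div_self hq0.ne']
        simp
      have hhalf : (1 / 2 : ℝ) ^ (s - 1) = 2 * (1 / 2 : ℝ) ^ s := by
        have e : (1 / 2 : ℝ) ^ s = (1 / 2 : ℝ) ^ (s - 1) * (1 / 2) := by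
          rw [← pow_succ]; congr 1; omega
        rw [e]; ring
      rw [hratio, ktp, hhalf, show ktq q1 s = q1 / Q s from rfl]
      rw [show 4 * q1 / (Q j * Real.sqrt (Q j)) * r ^ s
          = (4 * q1 * r ^ s) / (Q j * Real.sqrt (Q j)) by ring]
      rw [show (Q (s + 1) / Q j) ^ 2 * (2 * (1 / 2 : ℝ) ^ s * (q1 / Q s))
          = (Q (s + 1) * Q (s + 1) * (2 * (1 / 2 : ℝ) ^ s * q1)) / (Q j ^ 2 * Q s) by
        field_simp]
      rw [div_le_div_iff₀ (by positivity) (by positivity)]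
      have hm : Q (s + 1) * Q (s + 1) ≤ (2 * Q s) * (Real.sqrt (Q j) * (Real.sqrt 2) ^ s) :=
        mul_le_mul hAA hB (by linarith) (by positivity)
      have hrs : (1 / 2 : ℝ) ^ s * (Real.sqrt 2) ^ s = r ^ s := by rw [← mul_pow, hmulr]
      calc Q (s + 1) * Q (s + 1) * (2 * (1 / 2 : ℝ) ^ s * q1) * (Q j * Real.sqrt (Q j))
          ≤ ((2 * Q s) * (Real.sqrt (Q j) * (Real.sqrt 2) ^ s)) * (2 * (1 / 2 : ℝ) ^ s * q1)
              * (Q j * Real.sqrt (Q j)) := by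
            exact mul_le_mul_of_nonneg_right
              (mul_le_mul_of_nonneg_right hm (by positivity)) (by positivity)
        _ = 4 * q1 * ((1 / 2 : ℝ) ^ s * (Real.sqrt 2) ^ s)
              * (Q j * (Real.sqrt (Q j) * Real.sqrt (Q j)) * Q s) := by ring
        _ = 4 * q1 * r ^ s * (Q j ^ 2 * Q s) := by rw [hrs, hsQj]; ring
    calc (∑ s ∈ Finset.Icc 1 (j - 1), (ktq q1 j / ktq q1 (s + 1)) ^ 2 * (ktp s * ktq q1 s))
        ≤ ∑ s ∈ Finset.Icc 1 (j - 1), 4 * q1 / (Q j * Real.sqrt (Q j)) * r ^ s :=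
          Finset.sum_le_sum hterm
      _ = 4 * q1 / (Q j * Real.sqrt (Q j)) * ∑ s ∈ Finset.Icc 1 (j - 1), r ^ s := by
          rw [Finset.mul_sum]
      _ ≤ 4 * q1 / (Q j * Real.sqrt (Q j)) * (1 - r)⁻¹ := by
          apply mul_le_mul_of_nonneg_left _ (by positivity)
          have hsum : ∑ s ∈ Finset.Icc 1 (j - 1), r ^ s ≤ ∑' s : ℕ, r ^ s :=
            Summable.sum_le_tsum _ (fun i _ => by positivity) (summable_geometric_of_lt_one hr0 hr1)
          rwa [tsum_geometric_of_lt_one hr0 hr1] at hsum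
      _ ≤ 4 * q1 / (Q j * Real.sqrt (Q j)) * 4 := by
          apply mul_le_mul_of_nonneg_left _ (by positivity)
          have h14 : (1 / 4 : ℝ) ≤ 1 - r := by linarith
          calc (1 - r)⁻¹ ≤ ((1 : ℝ) / 4)⁻¹ := by
                apply inv_anti₀ (by norm_num) h14
            _ = 4 := by norm_num
      _ = 16 * kth q1 j := by rw [hkth]; ring
  have hf0 : ∀ t : ℕ, 0 ≤ (ktq q1 (j + t + 1) / ktq q1 j) * (ktp (j + t) * ktq q1 (j + t)) := by
    intro t
    have h1 : 0 < Q (j + t + 1) := lt_of_lt_of_le one_pos (hQ1 _ (by omega))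
    have h2 : 0 < Q (j + t) := lt_of_lt_of_le one_pos (hQ1 _ (by omega))
    rw [show ktq q1 (j + t + 1) = q1 / Q (j + t + 1) from rfl,
      show ktq q1 j = q1 / Q j from rfl, show ktq q1 (j + t) = q1 / Q (j + t) from rfl, ktp]
    positivity
  have hfg : ∀ t : ℕ, (ktq q1 (j + t + 1) / ktq q1 j) * (ktp (j + t) * ktq q1 (j + t))
      ≤ (q1 * (1 / 2 : ℝ) ^ (j - 1)) * (1 / 2 : ℝ) ^ t := by
    intro t
    have hQt1 : 1 ≤ Q (j + t) := hQ1 _ (by omega)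
    have hQt2 : 1 ≤ Q (j + t + 1) := hQ1 _ (by omega)
    have hQt1pos : 0 < Q (j + t) := by linarith
    have hQt2pos : 0 < Q (j + t + 1) := by linarith
    have hmono : Q j ≤ Q (j + t + 1) := by
      simp only [hQdef]
      push_cast
      nlinarith [Nat.cast_nonneg (α := ℝ) t, hq0.le]
    have e1 : ktq q1 (j + t + 1) / ktq q1 j ≤ 1 := by
      have er : ktq q1 (j + t + 1) / ktq q1 j = Q j / Q (j + t + 1) := by
        show q1 / Q (j + t + 1) / (q1 / Q j) = Q j / Q (j + t + 1)
        rw [div_div_div_comm, div_self hq0.ne']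
        simp
      rw [er, div_le_one hQt2pos]
      exact hmono
    have e2 : ktp (j + t) = (1 / 2 : ℝ) ^ (j - 1) * (1 / 2 : ℝ) ^ t := by
      rw [ktp, ← pow_add]
      congr 1
      omega
    have e3 : ktq q1 (j + t) ≤ q1 := by
      rw [show ktq q1 (j + t) = q1 / Q (j + t) from rfl, div_le_iff₀ hQt1pos]
      have h := mul_le_mul_of_nonneg_left hQt1 hq0.le
      linarith
    have hpq : 0 ≤ ktp (j + t) * ktq q1 (j + t) := by
      rw [show ktq q1 (j + t) = q1 / Q (j + t) from rfl, ktp]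
      positivity
    calc (ktq q1 (j + t + 1) / ktq q1 j) * (ktp (j + t) * ktq q1 (j + t))
        ≤ 1 * (ktp (j + t) * ktq q1 (j + t)) := mul_le_mul_of_nonneg_right e1 hpq
      _ = ktp (j + t) * ktq q1 (j + t) := one_mul _
      _ ≤ ktp (j + t) * q1 := mul_le_mul_of_nonneg_left e3 (by rw [ktp]; positivity)
      _ = (q1 * (1 / 2 : ℝ) ^ (j - 1)) * (1 / 2 : ℝ) ^ t := by rw [e2]; ring
  have hg : Summable (fun t : ℕ => (q1 * (1 / 2 : ℝ) ^ (j - 1)) * (1 / 2 : ℝ) ^ t) :=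
    (summable_geometric_of_lt_one (by norm_num) (by norm_num)).mul_left _
  have hf : Summable (fun t : ℕ =>
      (ktq q1 (j + t + 1) / ktq q1 j) * (ktp (j + t) * ktq q1 (j + t))) :=
    Summable.of_nonneg_of_le hf0 hfg hg
  refine ⟨hf, ?_⟩
  have ht1 := Summable.tsum_le_tsum hfg hf hg
  have ht2 : ∑' t : ℕ, (q1 * (1 / 2 : ℝ) ^ (j - 1)) * (1 / 2 : ℝ) ^ t
      = (q1 * (1 / 2 : ℝ) ^ (j - 1)) * 2 := by
    rw [tsum_mul_left, tsum_geometric_of_lt_one (by norm_num) (by norm_num)]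
    norm_num
  have hQsj : Real.sqrt (Q j) ≤ Q j := by
    nlinarith [Real.sqrt_nonneg (Q j), hsQj]
  have hQcast : Q j ≤ (j : ℝ) := by
    simp only [hQdef]
    have h : (1 : ℝ) ≤ (j : ℝ) := by exact_mod_cast hj
    nlinarith
  have hj2 : ((j : ℝ)) ^ 2 ≤ 3 * 2 ^ (j - 1) := by
    have h := nat_sq_le (j - 1)
    have e : j - 1 + 1 = j := by omega
    rw [e] at h
    exact_mod_cast h
  have hQQ : Q j * Real.sqrt (Q j) ≤ 3 * 2 ^ (j - 1) := by
    calc Q j * Real.sqrt (Q j) ≤ Q j * Q j := mul_le_mul_of_nonneg_left hQsj (by linarith)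
      _ ≤ (j : ℝ) * (j : ℝ) := mul_le_mul hQcast hQcast (by linarith) (by positivity)
      _ = ((j : ℝ)) ^ 2 := by ring
      _ ≤ 3 * 2 ^ (j - 1) := hj2
  have hhalfj : (1 / 2 : ℝ) ^ (j - 1) * 2 ^ (j - 1) = 1 := by
    rw [← mul_pow]
    norm_num
  calc (∑' t : ℕ, (ktq q1 (j + t + 1) / ktq q1 j) * (ktp (j + t) * ktq q1 (j + t)))
      ≤ (q1 * (1 / 2 : ℝ) ^ (j - 1)) * 2 := ht1.trans (le_of_eq ht2)
    _ ≤ 16 * kth q1 j := by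
        rw [hkth, show (16 : ℝ) * (q1 / (Q j * Real.sqrt (Q j)))
          = (16 * q1) / (Q j * Real.sqrt (Q j)) by ring, le_div_iff₀ (by positivity)]
        have h1 : q1 * (1 / 2 : ℝ) ^ (j - 1) * 2 * (Q j * Real.sqrt (Q j))
            ≤ q1 * (1 / 2 : ℝ) ^ (j - 1) * 2 * (3 * 2 ^ (j - 1)) :=
          mul_le_mul_of_nonneg_left hQQ (by positivity)
        have h2 : q1 * (1 / 2 : ℝ) ^ (j - 1) * 2 * (3 * 2 ^ (j - 1))
            = 6 * q1 * ((1 / 2 : ℝ) ^ (j - 1) * 2 ^ (j - 1)) := by ring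
        rw [h2, hhalfj, mul_one] at h1
        calc q1 * (1 / 2 : ℝ) ^ (j - 1) * 2 * (Q j * Real.sqrt (Q j)) ≤ 6 * q1 := h1
          _ ≤ 16 * q1 := by linarith
end
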